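/- Let ε₀ := 10⁻¹². For every graph G with (P3) input construction (A, X), A ∈ ℝ^{3n'×3n'}: suppose L, H ∈ ℝ^{3n'×3n'} are symmetric, L fits X, ‖H‖_F ≤ ε₀, A + L + H is positive semidefinite, and rank(A + L + H) ≤ 3. Let i, j ∈ V(G) be distinct vertices of the original graph G, let μ, ν ∈ {1,2,3}, and set t := (A + L + H)((i,μ),(j,ν)). Then (a) at least one of |t − 1| ≤ 1/20, |t + 1| ≤ 1/20, |t| ≤ 1/20 holds; and (b) if moreover {i,j} ∈ E(G), then |t| ≤ 1/20. -/

import Mathlib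

open Matrix

noncomputable section

/-- Unordered pairs of distinct vertices of `Fin N`, represented by ordered pairs
`(i, j)` with `i < j`. -/
abbrev Pairs (N : ℕ) := {p : Fin N × Fin N // p.1 < p.2}

/-- Vertices of the Peeters supergraph: the original vertices together with, for each
unordered pair `{i,j}` of distinct vertices, four new vertices `a, b, c, d`
(encoded as `(q, 0), (q, 1), (q, 2), (q, 3)`). -/
abbrev PV (N : ℕ) := Fin N ⊕ (Pairs N × Fin 4)

/-- The generating relation for the edges of the Peeters supergraph: the original edges
together with, for each unordered pair `q = {i,j}`, the nine edges
`{i,a}, {i,b}, {a,b}, {j,c}, {j,d}, {c,d}, {a,j}, {i,d}, {b,c}`. -/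
def peetersRel (N : ℕ) (G : SimpleGraph (Fin N)) : PV N → PV N → Prop := fun x y =>
  (∃ i j : Fin N, G.Adj i j ∧ x = Sum.inl i ∧ y = Sum.inl j) ∨
  (∃ q : Pairs N,
    (x = Sum.inl q.val.1 ∧ y = Sum.inr (q, 0)) ∨
    (x = Sum.inl q.val.1 ∧ y = Sum.inr (q, 1)) ∨
    (x = Sum.inr (q, 0) ∧ y = Sum.inr (q, 1)) ∨
    (x = Sum.inl q.val.2 ∧ y = Sum.inr (q, 2)) ∨
    (x = Sum.inl q.val.2 ∧ y = Sum.inr (q, 3)) ∨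
    (x = Sum.inr (q, 2) ∧ y = Sum.inr (q, 3)) ∨
    (x = Sum.inr (q, 0) ∧ y = Sum.inl q.val.2) ∨
    (x = Sum.inl q.val.1 ∧ y = Sum.inr (q, 3)) ∨
    (x = Sum.inr (q, 1) ∧ y = Sum.inr (q, 2)))

/-- The Peeters supergraph `G'` of `G`. -/
def peetersGraph (N : ℕ) (G : SimpleGraph (Fin N)) : SimpleGraph (PV N) :=
  SimpleGraph.fromRel (peetersRel N G)

/-- Row/column indices of the `(P3)` input construction: pairs `(v, μ)` with
`v ∈ V(G')` and `μ ∈ {1,2,3}`. -/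
abbrev Idx (N : ℕ) := PV N × Fin 3

/-- The matrix `A` of the `(P3)` input construction:
`A((v,μ),(w,ν)) = 1` if `v = w` and `μ ≠ ν`, and `0` otherwise. -/
def AP3 (N : ℕ) : Matrix (Idx N) (Idx N) ℝ := fun p q =>
  if p.1 = q.1 ∧ p.2 ≠ q.2 then 1 else 0

/-- `L` fits the edge set `X` of the `(P3)` input construction, i.e. `L` vanishes on
all pairs `{(v,μ),(w,ν)}` with `{v,w} ∈ E(G')` and on all pairs `{(v,μ),(v,ν)}` with
`μ ≠ ν`. -/
def FitsX (N : ℕ) (G : SimpleGraph (Fin N)) (L : Matrix (Idx N) (Idx N) ℝ) : Prop :=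
  (∀ p q : Idx N, (peetersGraph N G).Adj p.1 q.1 → L p q = 0) ∧
  (∀ (v : PV N) (μ ν : Fin 3), μ ≠ ν → L (v, μ) (v, ν) = 0)


/-- The Frobenius norm of a real matrix. -/
def frob {m n : Type*} [Fintype m] [Fintype n] (A : Matrix m n ℝ) : ℝ :=
  Real.sqrt (∑ i, ∑ j, (A i j) ^ 2)

/-!
Write `S = A + L + H`. Being positive semidefinite of rank at most three, `S` is the Gram matrix
of vectors in `ℝ³`; only two consequences are used: its `2 × 2` principal minors are nonnegative
and all its `4 × 4` minors vanish. The constraints say that the three vectors at a vertex of `G'`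
have pairwise inner products within `ε` of `1`, and that vectors at adjacent vertices are nearly
orthogonal. The six vertices of the gadget on `{i, j}` lie on the triangles `i a b` and `j c d`,
and through such a triangle the Schur complement of a vanishing principal minor shows that the
vectors at its vertices are almost unit vectors. Comparing further vanishing `4 × 4` minors with
those of their idealised near-orthonormal patterns (the determinant is Lipschitz on bounded
matrices) then gives approximate Parseval identities and orthogonality relations among `t` and
five other inner products, which leave only `t ≈ 1`, `t ≈ -1` or `t ≈ 0`. Part (b) is immediate,
as `i` and `j` are then adjacent in `G'`.
-/

open Finset

lemma Finset.abs_prod_sub_prod_le {ι : Type*} (s : Finset ι) {a b : ι → ℝ} {K δ : ℝ}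
    (hK : 1 ≤ K) (ha : ∀ i ∈ s, |a i| ≤ K) (hb : ∀ i ∈ s, |b i| ≤ K)
    (hab : ∀ i ∈ s, |a i - b i| ≤ δ) :
    |∏ i ∈ s, a i - ∏ i ∈ s, b i| ≤ #s * K ^ #s * δ := by
  classical
  induction s using Finset.induction_on with
  | empty => simp
  | insert i s hi ih =>
    simp only [mem_insert, forall_eq_or_imp] at ha hb hab
    have hδ : 0 ≤ δ := (abs_nonneg _).trans hab.1
    have hB : |∏ j ∈ s, b j| ≤ K ^ #s := by
      rw [abs_prod]
      exact (prod_le_prod (fun _ _ => abs_nonneg _) hb.2).trans (by rw [prod_const])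
    have hKs : K ^ #s ≤ K ^ #s * K := le_mul_of_one_le_right (by positivity) hK
    rw [prod_insert hi, prod_insert hi, card_insert_of_notMem hi]
    calc |a i * ∏ j ∈ s, a j - b i * ∏ j ∈ s, b j|
        = |a i * (∏ j ∈ s, a j - ∏ j ∈ s, b j) + (a i - b i) * ∏ j ∈ s, b j| := by congr 1; ring
      _ ≤ |a i| * |∏ j ∈ s, a j - ∏ j ∈ s, b j| + |a i - b i| * |∏ j ∈ s, b j| := by
        rw [← abs_mul, ← abs_mul]; exact abs_add_le _ _
      _ ≤ K * (#s * K ^ #s * δ) + δ * K ^ #s := by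
        gcongr
        · exact ha.1
        · exact ih ha.2 hb.2 hab.2
        · exact hab.1
      _ ≤ (#s + 1 : ℕ) * K ^ (#s + 1) * δ := by
        rw [pow_succ]
        push_cast
        nlinarith [mul_le_mul_of_nonneg_right hKs hδ]

namespace Matrix

lemma abs_det_sub_det_le {n : Type*} [Fintype n] [DecidableEq n] (M M' : Matrix n n ℝ) {K δ : ℝ}
    (hK : 1 ≤ K) (hM : ∀ i j, |M i j| ≤ K) (hM' : ∀ i j, |M' i j| ≤ K)
    (h : ∀ i j, |M i j - M' i j| ≤ δ) :
    |M.det - M'.det| ≤ (Fintype.card n).factorial * Fintype.card n * K ^ Fintype.card n * δ := by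
  rw [det_apply, det_apply, ← sum_sub_distrib]
  calc _ ≤ ∑ σ : Equiv.Perm n, |∏ i, M (σ i) i - ∏ i, M' (σ i) i| := by
        refine (abs_sum_le_sum_abs _ _).trans (sum_le_sum fun σ _ => ?_)
        rw [← smul_sub, Units.smul_def, zsmul_eq_mul, abs_mul, ← Int.cast_abs, Int.abs_eq_natAbs,
          Int.units_natAbs, Nat.cast_one, Int.cast_one, one_mul]
    _ ≤ ∑ _σ : Equiv.Perm n, (Fintype.card n * K ^ Fintype.card n * δ) :=
        sum_le_sum fun σ _ => by
          simpa using univ.abs_prod_sub_prod_le hK (fun i _ => hM _ _) (fun i _ => hM' _ _)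
            (fun i _ => h _ _)
    _ = _ := by simp [Fintype.card_perm, mul_assoc]

lemma abs_det_le_of_det_eq_zero {n : Type*} [Fintype n] [DecidableEq n] {M M' : Matrix n n ℝ}
    {K δ : ℝ} (hdet : M.det = 0) (hK : 1 ≤ K) (hM : ∀ i j, |M i j| ≤ K)
    (hM' : ∀ i j, |M' i j| ≤ K) (h : ∀ i j, |M i j - M' i j| ≤ δ) :
    |M'.det| ≤ (Fintype.card n).factorial * Fintype.card n * K ^ Fintype.card n * δ := by
  simpa [hdet] using abs_det_sub_det_le M M' hK hM hM' h

lemma det_submatrix_eq_zero_of_rank_lt {ι κ K : Type*} [Fintype ι] [Fintype κ] [DecidableEq κ]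
    [Field K] (M : Matrix ι ι K) (f g : κ → ι) (h : M.rank < Fintype.card κ) :
    (M.submatrix f g).det = 0 := by
  by_contra hdet
  have hunit : IsUnit (M.submatrix f g) := (isUnit_iff_isUnit_det _).mpr (Ne.isUnit hdet)
  have := rank_of_isUnit _ hunit ▸ rank_submatrix_le M f g
  omega

lemma det_fin_four_of {R : Type*} [CommRing R] (a b c d e f g h i j k l m n o p : R) :
    !![a, b, c, d; e, f, g, h; i, j, k, l; m, n, o, p].det =
      a * (f * (k * p - l * o) - g * (j * p - l * n) + h * (j * o - k * n))
      - b * (e * (k * p - l * o) - g * (i * p - l * m) + h * (i * o - k * m))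
      + c * (e * (j * p - l * n) - f * (i * p - l * m) + h * (i * n - j * m))
      - d * (e * (j * o - k * n) - f * (i * o - k * m) + g * (i * n - j * m)) := by
  rw [det_succ_row_zero]
  simp only [Fin.sum_univ_succ, det_fin_three, submatrix_apply, of_apply,
    Fin.succAbove, Fin.castSucc_zero, Fin.succ_zero_eq_one, Fin.succ_one_eq_two, Fin.castSucc_one,
    cons_val', cons_val_zero, cons_val_one, cons_val, cons_val_fin_one, Fin.reduceSucc,
    Fin.reduceCastSucc, Fin.reduceLT, lt_self_iff_false, not_lt_zero, Fin.succ_pos, Fin.lt_one_iff,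
    Fin.reduceEq, ↓reduceIte, Finset.univ_unique, Fin.default_eq_zero, Finset.sum_singleton,
    Fin.coe_ofNat_eq_mod]
  ring

variable {ι : Type*} {S : Matrix ι ι ℝ}

lemma PosSemidef.apply_symm (hS : S.PosSemidef) (p q : ι) : S q p = S p q :=
  (isHermitian_iff_isSymm.mp hS.1).apply p q

lemma PosSemidef.sq_apply_le (hS : S.PosSemidef) (p q : ι) : S p q ^ 2 ≤ S p p * S q q := by
  have h := (hS.submatrix ![p, q]).det_nonneg
  simp only [det_fin_two, submatrix_apply, cons_val_zero, cons_val_one] at h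
  rw [hS.apply_symm p q] at h
  nlinarith

lemma PosSemidef.abs_apply_le (hS : S.PosSemidef) {p q : ι} {K : ℝ} (hp : S p p ≤ K)
    (hq : S q q ≤ K) : |S p q| ≤ K := by
  have hK : 0 ≤ K := hS.diag_nonneg.trans hp
  refine abs_le_of_sq_le_sq ((hS.sq_apply_le p q).trans ?_) hK
  nlinarith [hS.diag_nonneg (i := p), hS.diag_nonneg (i := q)]

end Matrix

/-- `adjBilin g h f x₁ x₂ y₁ y₂` is `xᵀ (adjugate !![g, f; f, h]) y`. -/
def adjBilin (g h f x₁ x₂ y₁ y₂ : ℝ) : ℝ :=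
  x₁ * y₁ * h - (x₁ * y₂ + x₂ * y₁) * f + x₂ * y₂ * g

lemma abs_adjBilin_le {x₁ x₂ y₁ y₂ g h f ε : ℝ} (hx₁ : |x₁| ≤ ε) (hx₂ : |x₂| ≤ ε)
    (hy₁ : |y₁| ≤ ε) (hy₂ : |y₂| ≤ ε) (hg : 0 ≤ g) (hh : 0 ≤ h) (hf : |f| ≤ ε) :
    |adjBilin g h f x₁ x₂ y₁ y₂| ≤ ε ^ 2 * (g + h + 2 * ε) := by
  have hε : 0 ≤ ε := (abs_nonneg _).trans hx₁
  have hxy : ∀ {x y : ℝ}, |x| ≤ ε → |y| ≤ ε → |x * y| ≤ ε ^ 2 := fun hx hy => by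
    rw [abs_mul, sq]; exact mul_le_mul hx hy (abs_nonneg _) hε
  calc _ ≤ |x₁ * y₁ * h| + |(x₁ * y₂ + x₂ * y₁) * f| + |x₂ * y₂ * g| :=
        (abs_add_le _ _).trans (add_le_add_left (abs_sub _ _) _)
    _ ≤ |x₁ * y₁| * h + (|x₁ * y₂| + |x₂ * y₁|) * |f| + |x₂ * y₂| * g := by
        rw [abs_mul _ h, abs_mul _ f, abs_mul _ g, abs_of_nonneg hh, abs_of_nonneg hg]
        gcongr; exact abs_add_le _ _
    _ ≤ ε ^ 2 * h + (ε ^ 2 + ε ^ 2) * ε + ε ^ 2 * g := by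
        gcongr <;> exact hxy ‹_› ‹_›
    _ = ε ^ 2 * (g + h + 2 * ε) := by ring

/-- The Schur complement of the lower right block of a singular symmetric `4 × 4` matrix, with
the denominators cleared. -/
lemma mul_mul_sub_sq_le_of_det_eq_zero {a b p e₁ e₂ e₃ e₄ g h f : ℝ}
    (hdet : !![a, p, e₁, e₂; p, b, e₃, e₄; e₁, e₃, g, f; e₂, e₄, f, h].det = 0)
    (hΔ : 0 < g * h - f ^ 2) :
    (g * h - f ^ 2) * (a * b - p ^ 2) ≤ a * adjBilin g h f e₃ e₄ e₃ e₄
      + b * adjBilin g h f e₁ e₂ e₁ e₂ - 2 * p * adjBilin g h f e₁ e₂ e₃ e₄ := by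
  rw [det_fin_four_of] at hdet
  have h0 : (g * h - f ^ 2) * ((g * h - f ^ 2) * (a * b - p ^ 2)
      - (a * adjBilin g h f e₃ e₄ e₃ e₄ + b * adjBilin g h f e₁ e₂ e₁ e₂
        - 2 * p * adjBilin g h f e₁ e₂ e₃ e₄) + (e₁ * e₄ - e₂ * e₃) ^ 2) = 0 := by
    unfold adjBilin
    linear_combination (g * h - f ^ 2) * hdet
  rcases mul_eq_zero.mp h0 with h0 | h0
  · linarith
  · linarith [sq_nonneg (e₁ * e₄ - e₂ * e₃)]

lemma mul_sub_sq_le_of_det_eq_zero {a b p e₁ e₂ e₃ e₄ g h f ε : ℝ}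
    (hdet : !![a, p, e₁, e₂; p, b, e₃, e₄; e₁, e₃, g, f; e₂, e₄, f, h].det = 0)
    (ha : 0 ≤ a) (hb : 0 ≤ b) (hp : p ^ 2 ≤ a * b) (hε : ε ≤ 1 / 4)
    (hg : 1 / 2 ≤ g) (hh : 1 / 2 ≤ h) (he₁ : |e₁| ≤ ε) (he₂ : |e₂| ≤ ε) (he₃ : |e₃| ≤ ε)
    (he₄ : |e₄| ≤ ε) (hf : |f| ≤ ε) :
    a * b - p ^ 2 ≤ 24 * ε ^ 2 * (a + b) := by
  have hε0 : 0 ≤ ε := (abs_nonneg _).trans hf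
  have hgh : 1 / 4 ≤ g * h := by nlinarith
  have hf2 : f ^ 2 ≤ ε ^ 2 := by rw [← sq_abs]; exact pow_le_pow_left₀ (abs_nonneg f) hf 2
  have hΔ : g * h / 2 ≤ g * h - f ^ 2 := by nlinarith
  have key := mul_mul_sub_sq_le_of_det_eq_zero hdet (by linarith)
  set ρ := ε ^ 2 * (g + h + 2 * ε)
  have hg0 : 0 ≤ g := by linarith
  have hh0 : 0 ≤ h := by linarith
  have hR₀₀ := abs_adjBilin_le he₁ he₂ he₁ he₂ hg0 hh0 hf
  have hR₁₁ := abs_adjBilin_le he₃ he₄ he₃ he₄ hg0 hh0 hf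
  have hR₀₁ := abs_adjBilin_le he₁ he₂ he₃ he₄ hg0 hh0 hf
  have hp2 : 2 * |p| ≤ a + b := by
    have h4 : (2 * |p|) ^ 2 ≤ (a + b) ^ 2 := by nlinarith only [sq_abs p, sq_nonneg (a - b), hp]
    exact (abs_le_of_sq_le_sq' h4 (by linarith)).2
  have hsum : (g * h - f ^ 2) * (a * b - p ^ 2) ≤ 2 * (a + b) * ρ := by
    have h1 := mul_le_mul_of_nonneg_left (le_of_abs_le hR₁₁) ha
    have h2 := mul_le_mul_of_nonneg_left (le_of_abs_le hR₀₀) hb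
    have h3 : -(2 * p * adjBilin g h f e₁ e₂ e₃ e₄) ≤ (a + b) * ρ := by
      refine (neg_le_abs _).trans ?_
      rw [abs_mul, abs_mul, abs_two]
      exact mul_le_mul hp2 hR₀₁ (abs_nonneg _) (by linarith)
    linarith
  have hρ : ρ ≤ 6 * ε ^ 2 * (g * h) := by
    have : g + h + 2 * ε ≤ 6 * (g * h) := by nlinarith
    calc ρ ≤ ε ^ 2 * (6 * (g * h)) := mul_le_mul_of_nonneg_left this (sq_nonneg ε)
      _ = 6 * ε ^ 2 * (g * h) := by ring
  have hX : 0 ≤ a * b - p ^ 2 := by linarith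
  have : g * h / 2 * (a * b - p ^ 2) ≤ g * h / 2 * (24 * ε ^ 2 * (a + b)) := by
    nlinarith only [hsum, mul_le_mul_of_nonneg_right hΔ hX,
      mul_le_mul_of_nonneg_left hρ (by linarith : 0 ≤ 2 * (a + b))]
  exact le_of_mul_le_mul_left this (by linarith)

namespace Matrix.PosSemidef

variable {ι : Type*} [Fintype ι] {S : Matrix ι ι ℝ} {δ : ℝ}

lemma diag_mul_diag_sub_sq_le (hS : S.PosSemidef) (hr : S.rank ≤ 3)
    {ε : ℝ} (hε : ε ≤ 1 / 4) {p q r s : ι} (hrr : 1 / 2 ≤ S r r) (hss : 1 / 2 ≤ S s s)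
    (hpr : |S p r| ≤ ε) (hps : |S p s| ≤ ε) (hqr : |S q r| ≤ ε) (hqs : |S q s| ≤ ε)
    (hrs : |S r s| ≤ ε) :
    S p p * S q q - S p q ^ 2 ≤ 24 * ε ^ 2 * (S p p + S q q) := by
  have hdet := det_submatrix_eq_zero_of_rank_lt S ![p, q, r, s] ![p, q, r, s]
    (by simpa using hr.trans_lt (by norm_num))
  have hM : S.submatrix ![p, q, r, s] ![p, q, r, s] =
      !![S p p, S p q, S p r, S p s; S p q, S q q, S q r, S q s;
        S p r, S q r, S r r, S r s; S p s, S q s, S r s, S s s] := by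
    ext i j; fin_cases i <;> fin_cases j <;> first | rfl | exact hS.apply_symm _ _
  exact mul_sub_sq_le_of_det_eq_zero (hM ▸ hdet) hS.diag_nonneg hS.diag_nonneg
    (hS.sq_apply_le p q) hε hrr hss hpr hps hqr hqs hrs

lemma abs_one_sub_sq_sub_sq_le (hS : S.PosSemidef) (hr : S.rank ≤ 3) (hδ : δ ≤ 1)
    {i j c d : ι} (hi : |S i i - 1| ≤ δ) (hj : |S j j - 1| ≤ δ) (hc : |S c c - 1| ≤ δ)
    (hd : |S d d - 1| ≤ δ) (hjc : |S j c| ≤ δ) (hjd : |S j d| ≤ δ) (hcd : |S c d| ≤ δ)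
    (hid : |S i d| ≤ δ) :
    |1 - S i j ^ 2 - S i c ^ 2| ≤ 1536 * δ := by
  have hδ0 : 0 ≤ δ := (abs_nonneg _).trans hi
  have hle (p : ι) (h : |S p p - 1| ≤ δ) : S p p ≤ 2 := by linarith [le_abs_self (S p p - 1)]
  let x := ![i, j, c, d]
  have hx a : S (x a) (x a) ≤ 2 := by
    fin_cases a
    exacts [hle _ hi, hle _ hj, hle _ hc, hle _ hd]
  have hdet := det_submatrix_eq_zero_of_rank_lt S x x
    (by simpa using hr.trans_lt (by norm_num))
  have hM' : !![1, S i j, S i c, 0; S i j, 1, 0, 0; S i c, 0, 1, 0; 0, 0, 0, 1].det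
      = 1 - S i j ^ 2 - S i c ^ 2 := by
    rw [det_fin_four_of]; ring
  rw [← hM']
  refine (abs_det_le_of_det_eq_zero (δ := δ) hdet one_le_two
    (fun a b => hS.abs_apply_le (hx a) (hx b)) ?_ ?_).trans_eq (by norm_num [Nat.factorial])
  · have hij : |S i j| ≤ 2 := hS.abs_apply_le (hle _ hi) (hle _ hj)
    have hic : |S i c| ≤ 2 := hS.abs_apply_le (hle _ hi) (hle _ hc)
    intro a b
    fin_cases a <;> fin_cases b <;> simp [hij, hic]
  · intro a b
    fin_cases a <;> fin_cases b <;> simp_all [x, hS.apply_symm]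

lemma abs_apply_mul_apply_le (hS : S.PosSemidef) (hr : S.rank ≤ 3) (hδ : δ ≤ 1)
    {i j b c d : ι}
    (hi : |S i i - 1| ≤ δ) (hj : |S j j - 1| ≤ δ) (hb : |S b b - 1| ≤ δ)
    (hc : |S c c - 1| ≤ δ) (hd : |S d d - 1| ≤ δ) (hib : |S i b| ≤ δ) (hid : |S i d| ≤ δ)
    (hjc : |S j c| ≤ δ) (hjd : |S j d| ≤ δ) (hbc : |S b c| ≤ δ) (hcd : |S c d| ≤ δ) :
    |S i j * S j b| ≤ 1536 * δ := by
  have hδ0 : 0 ≤ δ := (abs_nonneg _).trans hi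
  have hle (p : ι) (h : |S p p - 1| ≤ δ) : S p p ≤ 2 := by linarith [le_abs_self (S p p - 1)]
  let x := ![i, j, c, d]
  let y := ![b, j, c, d]
  have hx a : S (x a) (x a) ≤ 2 := by
    fin_cases a
    exacts [hle _ hi, hle _ hj, hle _ hc, hle _ hd]
  have hy a : S (y a) (y a) ≤ 2 := by
    fin_cases a
    exacts [hle _ hb, hle _ hj, hle _ hc, hle _ hd]
  have hdet := det_submatrix_eq_zero_of_rank_lt S x y
    (by simpa using hr.trans_lt (by norm_num))
  have hM' : !![0, S i j, S i c, 0; S j b, 1, 0, 0; 0, 0, 1, 0; S d b, 0, 0, 1].det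
      = -(S i j * S j b) := by
    rw [det_fin_four_of]; ring
  rw [← abs_neg, ← hM']
  refine (abs_det_le_of_det_eq_zero (δ := δ) hdet one_le_two
    (fun a b => hS.abs_apply_le (hx a) (hy b)) ?_ ?_).trans_eq (by norm_num [Nat.factorial])
  · have hij : |S i j| ≤ 2 := hS.abs_apply_le (hle _ hi) (hle _ hj)
    have hic : |S i c| ≤ 2 := hS.abs_apply_le (hle _ hi) (hle _ hc)
    have hjb : |S j b| ≤ 2 := hS.abs_apply_le (hle _ hj) (hle _ hb)
    have hdb : |S d b| ≤ 2 := hS.abs_apply_le (hle _ hd) (hle _ hb)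
    intro a b
    fin_cases a <;> fin_cases b <;> simp [hij, hic, hjb, hdb]
  · intro a b
    fin_cases a <;> fin_cases b <;> simp_all [x, y, hS.apply_symm]

end Matrix.PosSemidef

lemma le_one_add_of_mul_le {ε m a b : ℝ} (hε0 : 0 ≤ ε) (hε : ε ≤ 1 / 100) (ha : 0 ≤ a)
    (hb : 0 ≤ b) (ham : a ≤ m) (hbm : b ≤ m) (hab : 1 - 3 * ε ≤ a * b)
    (hma : m * a ≤ 1 + 3 * ε + ε * (m + a)) (hmb : m * b ≤ 1 + 3 * ε + ε * (m + b)) :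
    m ≤ 1 + 8 * ε := by
  have hm : 0 ≤ m := ha.trans ham
  have hr : 0 ≤ 1 + 3 * ε + 2 * ε * m := by positivity
  have hma' : m * a ≤ 1 + 3 * ε + 2 * ε * m := by nlinarith
  have hmb' : m * b ≤ 1 + 3 * ε + 2 * ε * m := by nlinarith
  have hsq : (m * (1 - 2 * ε)) ^ 2 ≤ (1 + 3 * ε + 2 * ε * m) ^ 2 :=
    calc (m * (1 - 2 * ε)) ^ 2 = m ^ 2 * (1 - 2 * ε) ^ 2 := by ring
      _ ≤ m ^ 2 * (1 - 3 * ε) := by gcongr; nlinarith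
      _ ≤ m ^ 2 * (a * b) := by gcongr
      _ = (m * a) * (m * b) := by ring
      _ ≤ (1 + 3 * ε + 2 * ε * m) ^ 2 := by
        rw [sq]; exact mul_le_mul hma' hmb' (by positivity) hr
  have := (abs_le_of_sq_le_sq' hsq hr).2
  nlinarith

lemma abs_sq_sub_one_le {x ε : ℝ} (hx : |x - 1| ≤ ε) (hε : ε ≤ 1) : |x ^ 2 - 1| ≤ 3 * ε := by
  have h : |x + 1| ≤ 3 := by
    rw [show x + 1 = (x - 1) + 2 by ring]
    exact (abs_add_le _ _).trans (by rw [abs_two]; linarith)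
  rw [show x ^ 2 - 1 = (x - 1) * (x + 1) by ring, abs_mul]
  nlinarith [abs_nonneg (x - 1), abs_nonneg (x + 1)]

lemma near_sign_or_zero_of_near_orthonormal {t c bj bd ac ad : ℝ}
    (htc : |1 - t ^ 2 - c ^ 2| ≤ 1 / 100) (hb : |1 - bj ^ 2 - bd ^ 2| ≤ 1 / 100)
    (ha : |1 - ac ^ 2 - ad ^ 2| ≤ 1 / 100) (htb : |t * bj| ≤ 1 / 10 ^ 4)
    (hca : |c * ac| ≤ 1 / 10 ^ 4) (hab : |ad * bd| ≤ 1 / 10 ^ 4) :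
    |t - 1| ≤ 1 / 20 ∨ |t + 1| ≤ 1 / 20 ∨ |t| ≤ 1 / 20 := by
  obtain ⟨htc₁, htc₂⟩ := abs_le.mp htc
  obtain ⟨hb₁, hb₂⟩ := abs_le.mp hb
  obtain ⟨ha₁, ha₂⟩ := abs_le.mp ha
  have sq_le {x : ℝ} (h : |x| ≤ 1 / 10 ^ 4) : x ^ 2 ≤ 1 / 10 ^ 8 := by
    rw [← sq_abs]; nlinarith [abs_nonneg x]
  have htb2 := sq_le htb
  have hca2 := sq_le hca
  have hab2 := sq_le hab
  rcases le_or_gt (t ^ 2) (1 / 500) with hsmall | hbig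
  · exact Or.inr <| Or.inr <| abs_le_of_sq_le_sq (by linarith) (by norm_num)
  rcases le_or_gt (19 / 20) (t ^ 2) with hone | hmid
  · have hlo : 19 / 20 ≤ |t| := by
      have := sq_le_sq.mp (show (19 / 20 : ℝ) ^ 2 ≤ t ^ 2 by linarith)
      rwa [abs_of_pos (by norm_num : (0 : ℝ) < 19 / 20)] at this
    have hhi : |t| ≤ 21 / 20 := abs_le_of_sq_le_sq (by linarith [sq_nonneg c]) (by norm_num)
    rcases abs_cases t with ⟨ht, -⟩ | ⟨ht, -⟩
    · left; rw [abs_le]; constructor <;> linarith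
    · right; left; rw [abs_le]; constructor <;> linarith
  exfalso
  have hc2 : 1 / 25 ≤ c ^ 2 := by linarith
  have hbj2 : bj ^ 2 ≤ 1 / 10 ^ 5 := by nlinarith [sq_nonneg bj]
  have hbd2 : 49 / 50 ≤ bd ^ 2 := by linarith
  have had2 : ad ^ 2 ≤ 1 / 10 ^ 7 := by nlinarith [sq_nonneg ad]
  have hac2 : 49 / 50 ≤ ac ^ 2 := by linarith
  nlinarith [mul_le_mul hc2 hac2 (by norm_num) (sq_nonneg c)]

section

variable {ι : Type*} {S : Matrix ι ι ℝ} {ε : ℝ}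

-- `v : Fin 3 → ι` stands for the three rows `(x, 1), (x, 2), (x, 3)` of a vertex `x` of `G'`.

def OffDiagNearOne (S : Matrix ι ι ℝ) (ε : ℝ) (v : Fin 3 → ι) : Prop :=
  ∀ μ ν, μ ≠ ν → |S (v μ) (v ν) - 1| ≤ ε

def BlockNearZero (S : Matrix ι ι ℝ) (ε : ℝ) (v w : Fin 3 → ι) : Prop :=
  ∀ μ ν, |S (v μ) (w ν)| ≤ ε

lemma BlockNearZero.symm {v w : Fin 3 → ι} (hS : S.PosSemidef) (h : BlockNearZero S ε v w) :
    BlockNearZero S ε w v :=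
  fun μ ν => hS.apply_symm (v ν) (w μ) ▸ h ν μ

lemma OffDiagNearOne.exists_half_le_diag {v : Fin 3 → ι} (hS : S.PosSemidef)
    (hv : OffDiagNearOne S ε v) (hε : ε ≤ 1 / 4) : ∃ κ, 1 / 2 ≤ S (v κ) (v κ) := by
  by_contra! h
  have h01 := abs_le.mp (hv 0 1 (by decide))
  nlinarith [hS.sq_apply_le (v 0) (v 1), hS.diag_nonneg (i := v 0), hS.diag_nonneg (i := v 1),
    h 0, h 1]

variable [Fintype ι]

lemma OffDiagNearOne.abs_diag_sub_one_le {v w u : Fin 3 → ι} (hS : S.PosSemidef)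
    (hr : S.rank ≤ 3) (hε0 : 0 ≤ ε) (hε : ε ≤ 1 / 100) (hv : OffDiagNearOne S ε v)
    (hw : OffDiagNearOne S ε w) (hu : OffDiagNearOne S ε u) (hvw : BlockNearZero S ε v w)
    (hvu : BlockNearZero S ε v u) (hwu : BlockNearZero S ε w u) (κ : Fin 3) :
    |S (v κ) (v κ) - 1| ≤ 11 * ε := by
  obtain ⟨κw, hκw⟩ := hw.exists_half_le_diag hS (by linarith)
  obtain ⟨κu, hκu⟩ := hu.exists_half_le_diag hS (by linarith)
  have hsq μ ν (h : μ ≠ ν) : |S (v μ) (v ν) ^ 2 - 1| ≤ 3 * ε :=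
    abs_sq_sub_one_le (hv μ ν h) (by linarith)
  have hlo μ ν (h : μ ≠ ν) : 1 - 3 * ε ≤ S (v μ) (v μ) * S (v ν) (v ν) := by
    linarith [(abs_le.mp (hsq μ ν h)).1, hS.sq_apply_le (v μ) (v ν)]
  have hhi μ ν (h : μ ≠ ν) :
      S (v μ) (v μ) * S (v ν) (v ν) ≤ 1 + 3 * ε + ε * (S (v μ) (v μ) + S (v ν) (v ν)) := by
    have := hS.diag_mul_diag_sub_sq_le hr (by linarith) hκw hκu (hvw μ κw) (hvu μ κu)
      (hvw ν κw) (hvu ν κu) (hwu κw κu)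
    have hd := add_nonneg (hS.diag_nonneg (i := v μ)) (hS.diag_nonneg (i := v ν))
    nlinarith [(abs_le.mp (hsq μ ν h)).2, mul_le_mul_of_nonneg_right
      (show 24 * ε ^ 2 ≤ ε by nlinarith) hd]
  -- the largest diagonal entry is bounded through the two products it enters
  obtain ⟨κ₀, hκ₀⟩ := Finite.exists_max fun κ => S (v κ) (v κ)
  have hmax : S (v κ₀) (v κ₀) ≤ 1 + 8 * ε := by
    obtain ⟨μ, ν, hμ, hν, hμν⟩ : ∃ μ ν, μ ≠ κ₀ ∧ ν ≠ κ₀ ∧ μ ≠ ν := by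
      fin_cases κ₀ <;> decide
    exact le_one_add_of_mul_le hε0 hε hS.diag_nonneg hS.diag_nonneg (hκ₀ μ) (hκ₀ ν)
      (hlo μ ν hμν) (hhi κ₀ μ hμ.symm) (hhi κ₀ ν hν.symm)
  obtain ⟨ν, hν⟩ : ∃ ν, ν ≠ κ := ⟨κ + 1, by fin_cases κ <;> decide⟩
  have hκν := hlo κ ν hν.symm
  have hνmax := (hκ₀ ν).trans hmax
  have hκ := hS.diag_nonneg (i := v κ)
  rw [abs_le]
  constructor
  · nlinarith [mul_le_mul_of_nonneg_left hνmax hκ]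
  · linarith [hκ₀ κ]

theorem near_sign_or_zero_of_peeters_gadget (hS : S.PosSemidef) (hr : S.rank ≤ 3)
    (hε0 : 0 ≤ ε) (hε : ε ≤ 1 / 10 ^ 9) {I J A B C D : Fin 3 → ι}
    (hI : OffDiagNearOne S ε I) (hJ : OffDiagNearOne S ε J)
    (hA : OffDiagNearOne S ε A) (hB : OffDiagNearOne S ε B) (hC : OffDiagNearOne S ε C)
    (hD : OffDiagNearOne S ε D) (hIA : BlockNearZero S ε I A) (hIB : BlockNearZero S ε I B)
    (hAB : BlockNearZero S ε A B) (hJC : BlockNearZero S ε J C) (hJD : BlockNearZero S ε J D)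
    (hCD : BlockNearZero S ε C D) (hAJ : BlockNearZero S ε A J) (hID : BlockNearZero S ε I D)
    (hBC : BlockNearZero S ε B C) (μ ν : Fin 3) :
    |S (I μ) (J ν) - 1| ≤ 1 / 20 ∨ |S (I μ) (J ν) + 1| ≤ 1 / 20 ∨ |S (I μ) (J ν)| ≤ 1 / 20 := by
  have hε' : ε ≤ 1 / 100 := hε.trans (by norm_num)
  have nI := hI.abs_diag_sub_one_le hS hr hε0 hε' hA hB hIA hIB hAB
  have nA := hA.abs_diag_sub_one_le hS hr hε0 hε' hI hB (hIA.symm hS) hAB hIB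
  have nB := hB.abs_diag_sub_one_le hS hr hε0 hε' hI hA (hIB.symm hS) (hAB.symm hS) hIA
  have nJ := hJ.abs_diag_sub_one_le hS hr hε0 hε' hC hD hJC hJD hCD
  have nC := hC.abs_diag_sub_one_le hS hr hε0 hε' hJ hD (hJC.symm hS) hCD hJD
  have nD := hD.abs_diag_sub_one_le hS hr hε0 hε' hJ hC (hJD.symm hS) (hCD.symm hS) hJC
  set δ := 11 * ε
  have hδ : δ ≤ 1 := by linarith
  have relax {x y : ι} (h : |S x y| ≤ ε) : |S x y| ≤ δ := h.trans (by linarith)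
  have hIJC := hS.abs_one_sub_sq_sub_sq_le hr hδ (nI μ) (nJ ν) (nC 0) (nD 0) (relax (hJC ν 0))
    (relax (hJD ν 0)) (relax (hCD 0 0)) (relax (hID μ 0))
  have hBJD := hS.abs_one_sub_sq_sub_sq_le hr hδ (nB 0) (nJ ν) (nD 0) (nC 0) (relax (hJD ν 0))
    (relax (hJC ν 0)) (relax (hCD.symm hS 0 0)) (relax (hBC 0 0))
  have hACD := hS.abs_one_sub_sq_sub_sq_le hr hδ (nA 0) (nC 0) (nD 0) (nJ ν) (relax (hCD 0 0))
    (relax (hJC.symm hS 0 ν)) (relax (hJD.symm hS 0 ν)) (relax (hAJ 0 ν))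
  have hIJB := hS.abs_apply_mul_apply_le hr hδ (nI μ) (nJ ν) (nB 0) (nC 0) (nD 0)
    (relax (hIB μ 0)) (relax (hID μ 0)) (relax (hJC ν 0)) (relax (hJD ν 0)) (relax (hBC 0 0))
    (relax (hCD 0 0))
  have hICA := hS.abs_apply_mul_apply_le hr hδ (nI μ) (nC 0) (nA 0) (nJ ν) (nD 0)
    (relax (hIA μ 0)) (relax (hID μ 0)) (relax (hJC.symm hS 0 ν)) (relax (hCD 0 0))
    (relax (hAJ 0 ν)) (relax (hJD ν 0))
  have hADB := hS.abs_apply_mul_apply_le hr hδ (nA 0) (nD 0) (nB 0) (nC 0) (nJ ν)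
    (relax (hAB 0 0)) (relax (hAJ 0 ν)) (relax (hCD.symm hS 0 0)) (relax (hJD.symm hS 0 ν))
    (relax (hBC 0 0)) (relax (hJC.symm hS 0 ν))
  rw [hS.apply_symm (B 0) (J ν)] at hIJB
  rw [hS.apply_symm (A 0) (C 0)] at hICA
  rw [hS.apply_symm (B 0) (D 0)] at hADB
  have h1 : 1536 * δ ≤ 1 / 100 := by linarith
  have h2 : 1536 * δ ≤ 1 / 10 ^ 4 := by linarith
  exact near_sign_or_zero_of_near_orthonormal (hIJC.trans h1) (hBJD.trans h1) (hACD.trans h1)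
    (hIJB.trans h2) (hICA.trans h2) (hADB.trans h2)

end

lemma abs_apply_le_frob {m n : Type*} [Fintype m] [Fintype n] (A : Matrix m n ℝ) (i : m)
    (j : n) : |A i j| ≤ frob A := by
  refine Real.abs_le_sqrt ?_
  calc A i j ^ 2 ≤ ∑ j', A i j' ^ 2 :=
        single_le_sum (fun j' _ => sq_nonneg (A i j')) (mem_univ j)
    _ ≤ ∑ i', ∑ j', A i' j' ^ 2 :=
        single_le_sum (f := fun i' => ∑ j', A i' j' ^ 2)
          (fun i' _ => sum_nonneg fun j' _ => sq_nonneg _) (mem_univ i)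

section P3

variable {N : ℕ} {G : SimpleGraph (Fin N)} {L H : Matrix (Idx N) (Idx N) ℝ} {ε : ℝ}

lemma peetersGraph_adj_of_rel {x y : PV N} (h : peetersRel N G x y) (hne : x ≠ y) :
    (peetersGraph N G).Adj x y := by
  rw [peetersGraph, SimpleGraph.fromRel_adj]
  exact ⟨hne, Or.inl h⟩

lemma offDiagNearOne_AP3_add (hfit : FitsX N G L) (hH : ∀ p q, |H p q| ≤ ε) (x : PV N) :
    OffDiagNearOne (AP3 N + L + H) ε fun κ => (x, κ) := by
  intro κ l hκl
  simpa [AP3, hκl, hfit.2 x κ l hκl] using hH (x, κ) (x, l)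

lemma blockNearZero_AP3_add (hfit : FitsX N G L) (hH : ∀ p q, |H p q| ≤ ε) {x y : PV N}
    (hxy : (peetersGraph N G).Adj x y) :
    BlockNearZero (AP3 N + L + H) ε (fun κ => (x, κ)) fun κ => (y, κ) := by
  intro κ l
  simpa [AP3, hxy.ne, hfit.1 (x, κ) (y, l) hxy] using hH (x, κ) (y, l)

theorem near_sign_or_zero_of_pair (hfit : FitsX N G L) (hH : ∀ p q, |H p q| ≤ ε)
    (hε0 : 0 ≤ ε) (hε : ε ≤ 1 / 10 ^ 9) (hpsd : (AP3 N + L + H).PosSemidef)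
    (hrank : (AP3 N + L + H).rank ≤ 3) (q : Pairs N) (μ ν : Fin 3) :
    let t := (AP3 N + L + H) (Sum.inl q.val.1, μ) (Sum.inl q.val.2, ν)
    |t - 1| ≤ 1 / 20 ∨ |t + 1| ≤ 1 / 20 ∨ |t| ≤ 1 / 20 := by
  have V := offDiagNearOne_AP3_add hfit hH
  have E {x y : PV N} (h : peetersRel N G x y) (hne : x ≠ y) :=
    blockNearZero_AP3_add hfit hH (peetersGraph_adj_of_rel h hne)
  exact near_sign_or_zero_of_peeters_gadget hpsd hrank hε0 hε (V _) (V _) (V (.inr (q, 0)))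
    (V (.inr (q, 1))) (V (.inr (q, 2))) (V (.inr (q, 3)))
    (E (.inr ⟨q, by simp⟩) (by simp)) (E (.inr ⟨q, by simp⟩) (by simp))
    (E (.inr ⟨q, by simp⟩) (by simp)) (E (.inr ⟨q, by simp⟩) (by simp))
    (E (.inr ⟨q, by simp⟩) (by simp)) (E (.inr ⟨q, by simp⟩) (by simp))
    (E (.inr ⟨q, by simp⟩) (by simp)) (E (.inr ⟨q, by simp⟩) (by simp))
    (E (.inr ⟨q, by simp⟩) (by simp)) μ ν

end P3

theorem stmt10_general (N : ℕ) (G : SimpleGraph (Fin N)) (L H : Matrix (Idx N) (Idx N) ℝ)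
    (hfit : FitsX N G L)
    (hHnorm : frob H ≤ (1 / 10 ^ 12 : ℝ))
    (hpsd : (AP3 N + L + H).PosSemidef) (hrank : (AP3 N + L + H).rank ≤ 3)
    (i j : Fin N) (hij : i ≠ j) (μ ν : Fin 3) :
    (|(AP3 N + L + H) (Sum.inl i, μ) (Sum.inl j, ν) - 1| ≤ 1 / 20 ∨
      |(AP3 N + L + H) (Sum.inl i, μ) (Sum.inl j, ν) + 1| ≤ 1 / 20 ∨
      |(AP3 N + L + H) (Sum.inl i, μ) (Sum.inl j, ν)| ≤ 1 / 20) ∧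
    (G.Adj i j → |(AP3 N + L + H) (Sum.inl i, μ) (Sum.inl j, ν)| ≤ 1 / 20) := by
  have hHε p q : |H p q| ≤ 1 / 10 ^ 12 := (abs_apply_le_frob H p q).trans hHnorm
  refine ⟨?_, fun hadj => ?_⟩
  · rcases hij.lt_or_gt with h | h
    · exact near_sign_or_zero_of_pair hfit hHε (by norm_num) (by norm_num) hpsd hrank
        ⟨(i, j), h⟩ μ ν
    · rw [← hpsd.apply_symm]
      exact near_sign_or_zero_of_pair hfit hHε (by norm_num) (by norm_num) hpsd hrank
        ⟨(j, i), h⟩ ν μ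
  · have hadj' := peetersGraph_adj_of_rel (.inl ⟨i, j, hadj, rfl, rfl⟩) (by simpa using hij)
    exact (blockNearZero_AP3_add hfit hHε hadj' μ ν).trans (by norm_num)

/-- With `ε₀ := 10⁻¹²`: under the hypotheses of the `(P3)`
construction with a fitting `L` and a small perturbation `H`, for distinct original
vertices `i, j` of `G` and `μ, ν ∈ {1,2,3}`, the entry
`t := (A + L + H)((i,μ),(j,ν))` satisfies: (a) one of `|t − 1| ≤ 1/20`,
`|t + 1| ≤ 1/20`, `|t| ≤ 1/20`; (b) if `{i,j} ∈ E(G)` then `|t| ≤ 1/20`. -/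
theorem stmt10 (N : ℕ) (G : SimpleGraph (Fin N)) (L H : Matrix (Idx N) (Idx N) ℝ)
    (hL : L.IsSymm) (hH : H.IsSymm) (hfit : FitsX N G L)
    (hHnorm : frob H ≤ (1 / 10 ^ 12 : ℝ))
    (hpsd : (AP3 N + L + H).PosSemidef) (hrank : (AP3 N + L + H).rank ≤ 3)
    (i j : Fin N) (hij : i ≠ j) (μ ν : Fin 3) :
    (|(AP3 N + L + H) (Sum.inl i, μ) (Sum.inl j, ν) - 1| ≤ 1 / 20 ∨
      |(AP3 N + L + H) (Sum.inl i, μ) (Sum.inl j, ν) + 1| ≤ 1 / 20 ∨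
      |(AP3 N + L + H) (Sum.inl i, μ) (Sum.inl j, ν)| ≤ 1 / 20) ∧
    (G.Adj i j → |(AP3 N + L + H) (Sum.inl i, μ) (Sum.inl j, ν)| ≤ 1 / 20) :=
  stmt10_general N G L H hfit hHnorm hpsd hrank i j hij μ ν
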